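/- arXiv:2004.09155 — 2 statements merged into one kernel-verified Lean document; each statement's English description precedes it below -/
import Mathlib

section
/- For any prime p > 3, H_{⌊p/2⌋} ≡ -2·q_p(2) (mod p), where H_n = ∑_{k=1}^n 1/k is taken in Z/pZ and q_p(2) = (2^{p-1}-1)/p. -/
/-! For `0 < k < p` we have `p ∣ C(p, k)` and `C(p, k) / p = C(p - 1, k - 1) / k ≡ (-1)^(k-1) / k`
modulo `p`, so summing over `k` gives `2 q_p(2) = (2^p - 2) / p ≡ ∑_{k<p} (-1)^(k-1) / k`.
Separating odd and even `k`, the alternating sum is `H_{p-1} - 2 ∑_{j ≤ p/2} 1/(2j) = H_{p-1} - H_{p/2}`,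
and `H_{p-1} = ∑_{x ∈ 𝔽_p} x⁻¹ = ∑_{x ∈ 𝔽_p} x = 0`. -/

open Finset

theorem ZMod.sum_range_natCast {M : Type*} [AddCommMonoid M] (n : ℕ) [NeZero n]
    (f : ZMod n → M) : ∑ k ∈ range n, f k = ∑ x, f x :=
  sum_nbij' (↑) ZMod.val (by simp) (by simp [ZMod.val_lt])
    (fun _ hk => ZMod.val_cast_of_lt (mem_range.1 hk)) (fun x _ => ZMod.natCast_zmod_val x)
    (fun _ _ => rfl)

theorem FiniteField.sum_inv_eq_zero {K : Type*} [Field K] [Fintype K]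
    (hK : 2 < Fintype.card K) : ∑ x : K, x⁻¹ = 0 := by
  -- with `0⁻¹ = 0`, inversion is a permutation of `K`
  rw [Fintype.sum_equiv (Equiv.inv K) (·⁻¹) id fun _ => rfl]
  simpa using FiniteField.sum_pow_lt_card_sub_one K 1 (by omega)

theorem Nat.sum_Icc_choose_add_two {n : ℕ} (hn : n ≠ 0) :
    ∑ k ∈ Icc 1 (n - 1), n.choose k + 2 = 2 ^ n := by
  obtain ⟨m, rfl⟩ := Nat.exists_eq_succ_of_ne_zero hn
  rw [← Nat.sum_range_choose, sum_range_succ, sum_range_succ', ← Nat.Ico_zero_eq_range,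
    sum_Ico_add' (c := 1), Ico_add_one_right_eq_Icc]
  simp

theorem Finset.sum_Icc_two_mul_neg_one_pow_mul {R : Type*} [CommRing R] (f : ℕ → R) (m : ℕ) :
    ∑ k ∈ Icc 1 (2 * m), (-1) ^ (k + 1) * f k
      = ∑ k ∈ Icc 1 (2 * m), f k - 2 * ∑ j ∈ Icc 1 m, f (2 * j) := by
  induction m with
  | zero => simp
  | succ m ih =>
    have hsign : (-1 : R) ^ (2 * m) = 1 := by rw [pow_mul]; simp
    rw [sum_Icc_succ_top (by omega) fun j => f (2 * j), show 2 * (m + 1) = 2 * m + 1 + 1 by ring,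
      sum_Icc_succ_top (by omega), sum_Icc_succ_top (by omega), sum_Icc_succ_top (by omega),
      sum_Icc_succ_top (by omega), ih]
    simp only [pow_succ, hsign]
    ring

theorem two_mul_fermat_quotient_two_eq_sum_choose_div {p : ℕ} (hp : p.Prime) (hp2 : p ≠ 2) :
    2 * ((2 ^ (p - 1) - 1 : ℤ) / p) = ∑ k ∈ Icc 1 (p - 1), ((p.choose k / p : ℕ) : ℤ) := by
  have hcop : IsCoprime (2 : ℤ) p :=
    Nat.isCoprime_iff_coprime.2 ((Nat.coprime_primes Nat.prime_two hp).2 hp2.symm)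
  have hfermat : (p : ℤ) ∣ 2 ^ (p - 1) - 1 :=
    (Int.ModEq.pow_card_sub_one_eq_one hp hcop).symm.dvd
  refine mul_left_cancel₀ (Int.natCast_ne_zero.2 hp.ne_zero) ?_
  calc (p : ℤ) * (2 * ((2 ^ (p - 1) - 1) / p)) = 2 ^ p - 2 := by
        rw [mul_left_comm, Int.mul_ediv_cancel' hfermat, mul_sub, ← pow_succ',
          Nat.sub_add_cancel hp.one_le, mul_one]
    _ = ∑ k ∈ Icc 1 (p - 1), (p.choose k : ℤ) := by
        have := Nat.sum_Icc_choose_add_two hp.ne_zero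
        zify at this
        linarith
    _ = p * ∑ k ∈ Icc 1 (p - 1), ((p.choose k / p : ℕ) : ℤ) := by
        rw [mul_sum]
        refine sum_congr rfl fun k hk => ?_
        rw [mem_Icc] at hk
        rw [← Nat.cast_mul, Nat.mul_div_cancel' (hp.dvd_choose_self (by omega) (by omega))]

section

variable {p : ℕ} [hp : Fact p.Prime]

theorem ZMod.sum_Icc_inv_eq_zero (hp2 : p ≠ 2) : ∑ k ∈ Icc 1 (p - 1), (k : ZMod p)⁻¹ = 0 := by
  have htwo_lt : 2 < p := lt_of_le_of_ne hp.out.two_le (Ne.symm hp2)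
  calc ∑ k ∈ Icc 1 (p - 1), (k : ZMod p)⁻¹ = ∑ k ∈ range p, (k : ZMod p)⁻¹ :=
        -- the extra term `k = 0` is `0⁻¹ = 0`
        sum_subset (fun k hk => by simp at hk ⊢; omega) fun k hk hk' => by
          obtain rfl : k = 0 := by simp at hk hk'; omega
          simp
    _ = ∑ x : ZMod p, x⁻¹ := ZMod.sum_range_natCast p (·⁻¹)
    _ = 0 := FiniteField.sum_inv_eq_zero (by rwa [ZMod.card])

theorem ZMod.natCast_choose_pred {j : ℕ} (hj : j < p) : ((p - 1).choose j : ZMod p) = (-1) ^ j := by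
  induction j with
  | zero => simp
  | succ j ih =>
    have hpascal := Nat.choose_succ_succ' (p - 1) j
    rw [Nat.sub_add_cancel hp.out.one_le] at hpascal
    have hvanish : (p.choose (j + 1) : ZMod p) = 0 :=
      (ZMod.natCast_eq_zero_iff _ _).2 (hp.out.dvd_choose_self j.succ_ne_zero hj)
    rw [hpascal, Nat.cast_add, ih (by omega)] at hvanish
    rw [pow_succ]
    linear_combination hvanish

theorem ZMod.natCast_choose_div_self {k : ℕ} (hk : 0 < k) (hkp : k < p) :
    ((p.choose k / p : ℕ) : ZMod p) = (-1) ^ (k + 1) * (k : ZMod p)⁻¹ := by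
  obtain ⟨j, rfl⟩ : ∃ j, k = j + 1 := ⟨k - 1, by omega⟩
  have hk0 : ((j + 1 : ℕ) : ZMod p) ≠ 0 :=
    (ZMod.natCast_eq_zero_iff _ _).not.2 (Nat.not_dvd_of_pos_of_lt hk hkp)
  have hmul : p.choose (j + 1) / p * (j + 1) = (p - 1).choose j := by
    have := Nat.add_one_mul_choose_eq (p - 1) j
    rw [Nat.sub_add_cancel hp.out.one_le] at this
    rw [Nat.div_mul_right_comm (hp.out.dvd_choose_self j.succ_ne_zero hkp), ← this,
      Nat.mul_div_cancel_left _ hp.out.pos]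
  rw [eq_mul_inv_iff_mul_eq₀ hk0, ← Nat.cast_mul, hmul, ZMod.natCast_choose_pred (by omega)]
  ring

theorem ZMod.sum_Icc_neg_one_pow_mul_inv (hp2 : p ≠ 2) :
    ∑ k ∈ Icc 1 (p - 1), (-1) ^ (k + 1) * (k : ZMod p)⁻¹
      = 2 * (((2 ^ (p - 1) - 1 : ℤ) / p : ℤ) : ZMod p) := by
  have h := congrArg (Int.cast : ℤ → ZMod p)
    (two_mul_fermat_quotient_two_eq_sum_choose_div hp.out hp2)
  simp only [Int.cast_mul, Int.cast_ofNat, Int.cast_sum, Int.cast_natCast] at h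
  rw [h]
  refine sum_congr rfl fun k hk => ?_
  rw [mem_Icc] at hk
  exact (ZMod.natCast_choose_div_self hk.1 (Nat.lt_of_le_pred hp.out.pos hk.2)).symm

end

theorem harmonic_half_eq_neg_two_fermat_quotient (p : ℕ) (hp : p.Prime) (hp3 : 3 < p) :
    (∑ k ∈ Finset.Icc 1 (p / 2), ((k : ZMod p))⁻¹)
      = -2 * (((2 ^ (p - 1) - 1 : ℤ) / (p : ℤ) : ℤ) : ZMod p) := by
  have : Fact p.Prime := ⟨hp⟩
  have hp2 : p ≠ 2 := by omega
  have hhalf : p - 1 = 2 * (p / 2) := by have := Nat.odd_iff.1 (hp.odd_of_ne_two hp2); omega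
  have heven : 2 * ∑ j ∈ Icc 1 (p / 2), ((2 * j : ℕ) : ZMod p)⁻¹
      = ∑ j ∈ Icc 1 (p / 2), (j : ZMod p)⁻¹ := by
    have h2 : (2 : ZMod p) ≠ 0 := Ring.two_ne_zero (by rwa [ZMod.ringChar_zmod_n])
    rw [mul_sum]
    refine sum_congr rfl fun j _ => ?_
    rw [Nat.cast_mul, Nat.cast_ofNat, mul_inv, mul_inv_cancel_left₀ h2]
  have halt := Finset.sum_Icc_two_mul_neg_one_pow_mul (fun k => (k : ZMod p)⁻¹) (p / 2)
  rw [← hhalf, ZMod.sum_Icc_neg_one_pow_mul_inv hp2, ZMod.sum_Icc_inv_eq_zero hp2, heven] at halt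
  linear_combination halt
end

section
/- For any prime p > 3, H_{⌊p/3⌋} ≡ -(3/2)·q_p(3) (mod p), where H_n = ∑_{k=1}^n 1/k in Z/pZ and q_p(3) = (3^{p-1}-1)/p. -/
/-!
Lerch's formula `a q_p(a) ≡ ∑_{j=1}^{p-1} ⌊aj/p⌋ / j` comes from expanding
`∏ aj = ∏ (r_j + p ⌊aj/p⌋)` modulo `p²`, where the residues `r_j = aj mod p` run over
`1, …, p - 1`. For `a = 3` the floor is `0`, `1`, `2` on the three thirds of `[1, p - 1]`.
The reflection `k ↦ p - k` turns the last third into `-H_{⌊p/3⌋}` and shows `H_{p-1} = 0`,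
so the middle third vanishes and `3 q_p(3) = -2 H_{⌊p/3⌋}`.
-/
open Finset

theorem Finset.prod_add_mul_of_mul_self_eq_zero {ι R : Type*} [DecidableEq ι] [CommRing R]
    {ε : R} (hε : ε * ε = 0) (s : Finset ι) (a b : ι → R) :
    ∏ i ∈ s, (a i + ε * b i) = ∏ i ∈ s, a i + ε * ∑ i ∈ s, b i * ∏ j ∈ s.erase i, a j := by
  induction s using Finset.induction_on with
  | empty => simp
  | @insert x s hx ih =>
    have hsum : ∑ i ∈ s, b i * ∏ j ∈ (insert x s).erase i, a j
        = a x * ∑ i ∈ s, b i * ∏ j ∈ s.erase i, a j := by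
      rw [mul_sum]
      refine sum_congr rfl fun i hi => ?_
      rw [erase_insert_of_ne (ne_of_mem_of_not_mem hi hx).symm,
        prod_insert (mt mem_of_mem_erase hx)]
      ring
    rw [prod_insert hx, ih, prod_insert hx, sum_insert hx, erase_insert hx, hsum]
    linear_combination b x * (∑ i ∈ s, b i * ∏ j ∈ s.erase i, a j) * hε

theorem ZMod.intCast_eq_intCast_of_natCast_mul_eq {p : ℕ} (hp : p ≠ 0) {u v : ℤ}
    (h : ((p * u : ℤ) : ZMod (p ^ 2)) = ((p * v : ℤ) : ZMod (p ^ 2))) : (u : ZMod p) = v := by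
  rw [ZMod.intCast_eq_intCast_iff_dvd_sub] at h ⊢
  push_cast at h
  rwa [sq, ← mul_sub, mul_dvd_mul_iff_left (by exact_mod_cast hp)] at h

theorem ZMod.natCast_ne_zero_of_pos_of_lt {p k : ℕ} (h0 : 0 < k) (hk : k < p) :
    (k : ZMod p) ≠ 0 := by
  rw [Ne, ZMod.natCast_eq_zero_iff]
  exact Nat.not_dvd_of_pos_of_lt h0 hk

theorem prod_Ico_one_mul_mod_eq {p a : ℕ} [Fact p.Prime] (ha : (a : ZMod p) ≠ 0) :
    ∏ j ∈ Ico 1 p, a * j % p = ∏ j ∈ Ico 1 p, j := by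
  have hmaps : ∀ j ∈ Ico 1 p, a * j % p ∈ Ico 1 p := by
    intro j hj
    rw [mem_Ico] at hj ⊢
    refine ⟨Nat.pos_of_ne_zero fun h => ?_, Nat.mod_lt _ (Fact.out : p.Prime).pos⟩
    have h' := congrArg (Nat.cast : ℕ → ZMod p) h
    push_cast [ZMod.natCast_mod] at h'
    exact mul_ne_zero ha (ZMod.natCast_ne_zero_of_pos_of_lt hj.1 hj.2) h'
  have hinj : Set.InjOn (fun j => a * j % p) (Ico 1 p : Set ℕ) := by
    intro i hi j hj hij
    simp only [coe_Ico, Set.mem_Ico] at hi hj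
    have hij' : ((a * i : ℕ) : ZMod p) = ((a * j : ℕ) : ZMod p) :=
      (ZMod.natCast_eq_natCast_iff' _ _ _).2 hij
    push_cast at hij'
    have := (ZMod.natCast_eq_natCast_iff' _ _ _).1 (mul_left_cancel₀ ha hij')
    rwa [Nat.mod_eq_of_lt hi.2, Nat.mod_eq_of_lt hj.2] at this
  exact prod_nbij _ hmaps hinj (surjOn_of_injOn_of_card_le _ hmaps hinj le_rfl) fun _ _ => rfl

def fermatQuotient (p a : ℕ) : ℤ := ((a : ℤ) ^ (p - 1) - 1) / p

theorem lerch_formula {p a : ℕ} [hp : Fact p.Prime] (ha : (a : ZMod p) ≠ 0) :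
    (a : ZMod p) * fermatQuotient p a = ∑ j ∈ Ico 1 p, ((a * j / p : ℕ) : ZMod p) / j := by
  set q := fermatQuotient p a
  set T : ℕ := ∑ j ∈ Ico 1 p, (a * j / p) * ∏ i ∈ (Ico 1 p).erase j, (a * i % p) with hT
  have hq : (a : ℤ) ^ (p - 1) - 1 = p * q := by
    refine (Int.mul_ediv_cancel' ?_).symm
    rw [← ZMod.intCast_zmod_eq_zero_iff_dvd]
    push_cast
    rw [ZMod.pow_card_sub_one_eq_one ha, sub_self]
  have hsq : ((p * (q * (∏ j ∈ Ico 1 p, j : ℕ)) : ℤ) : ZMod (p ^ 2))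
      = ((p * T : ℤ) : ZMod (p ^ 2)) := by
    have hε : (p : ZMod (p ^ 2)) * p = 0 := by
      rw [← sq]; exact_mod_cast ZMod.natCast_self (p ^ 2)
    have hdiv : ∀ j, ((a * j % p : ℕ) : ZMod (p ^ 2)) + p * ((a * j / p : ℕ) : ZMod (p ^ 2))
        = a * j := fun j => by
      rw [← Nat.cast_mul, ← Nat.cast_mul, ← Nat.cast_add, Nat.mod_add_div]
    have h := prod_add_mul_of_mul_self_eq_zero hε (Ico 1 p)
      (fun j => ((a * j % p : ℕ) : ZMod (p ^ 2))) (fun j => ((a * j / p : ℕ) : ZMod (p ^ 2)))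
    rw [prod_congr rfl fun j _ => hdiv j, prod_mul_distrib, prod_const, Nat.card_Ico,
      ← Nat.cast_prod, ← Nat.cast_prod, prod_Ico_one_mul_mod_eq ha] at h
    have hq' := congrArg (Int.cast : ℤ → ZMod (p ^ 2)) hq
    push_cast at h hq' ⊢
    simp only [hT, Nat.cast_sum, Nat.cast_mul, Nat.cast_prod]
    linear_combination h - (∏ j ∈ Ico 1 p, (j : ZMod (p ^ 2))) * hq'
  have hTmod :
      (T : ZMod p) = -((a : ZMod p)⁻¹ * ∑ j ∈ Ico 1 p, ((a * j / p : ℕ) : ZMod p) / j) := by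
    simp only [hT, Nat.cast_sum, Nat.cast_mul, Nat.cast_prod, ZMod.natCast_mod, mul_sum,
      ← sum_neg_distrib]
    refine sum_congr rfl fun j hj => ?_
    have hprod : (a * j : ZMod p) * ∏ i ∈ (Ico 1 p).erase j, (a * i : ZMod p) = -1 := by
      rw [mul_prod_erase _ (fun i : ℕ => (a : ZMod p) * i) hj, prod_mul_distrib, prod_const,
        Nat.card_Ico, ZMod.pow_card_sub_one_eq_one ha, one_mul, ZMod.prod_Ico_one_prime]
    have hinv : ∏ i ∈ (Ico 1 p).erase j, (a * i : ZMod p) = -(a * j : ZMod p)⁻¹ :=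
      neg_eq_iff_eq_neg.1 (eq_inv_of_mul_eq_one_right (by rw [mul_neg, hprod, neg_neg]))
    rw [hinv, mul_inv]
    ring
  have hmod := ZMod.intCast_eq_intCast_of_natCast_mul_eq hp.out.ne_zero hsq
  push_cast at hmod
  rw [ZMod.prod_Ico_one_prime, hTmod, mul_neg_one, neg_inj] at hmod
  rw [hmod, mul_inv_cancel_left₀ ha]

def harmonicZMod (p n : ℕ) : ZMod p := ∑ k ∈ Icc 1 n, (k : ZMod p)⁻¹

theorem sum_Ico_sub_inv_eq_neg_harmonicZMod {p n : ℕ} [Fact p.Prime] (hn : n ≤ p) :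
    ∑ k ∈ Ico (p - n) p, (k : ZMod p)⁻¹ = -harmonicZMod p n := by
  rw [harmonicZMod, ← sum_neg_distrib]
  refine sum_nbij' (fun k => p - k) (fun k => p - k) ?_ ?_ ?_ ?_ ?_ <;>
    intro k hk <;> simp only [mem_Ico, mem_Icc] at hk ⊢
  · omega
  · omega
  · omega
  · omega
  · rw [Nat.cast_sub hk.2.le, ZMod.natCast_self, zero_sub, ← neg_inv, neg_neg]

theorem sum_Ico_one_inv_eq_zero {p : ℕ} [Fact p.Prime] (hp : p ≠ 2) :
    ∑ k ∈ Ico 1 p, (k : ZMod p)⁻¹ = 0 := by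
  have hp1 : 1 ≤ p := (Fact.out : p.Prime).one_le
  have h := sum_Ico_sub_inv_eq_neg_harmonicZMod (p := p) (Nat.sub_le p 1)
  rw [Nat.sub_sub_self hp1, harmonicZMod, ← Ico_add_one_right_eq_Icc,
    Nat.sub_add_cancel hp1] at h
  have h2 : (2 : ZMod p) ≠ 0 := by
    exact_mod_cast ZMod.natCast_ne_zero_of_pos_of_lt two_pos
      (lt_of_le_of_ne (Fact.out : p.Prime).two_le (Ne.symm hp))
  exact (mul_eq_zero.1 (by linear_combination h : (2 : ZMod p) * _ = 0)).resolve_left h2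

theorem sum_Ico_three_mul_div_div_eq_neg_two_mul_harmonicZMod {p : ℕ} [hp : Fact p.Prime]
    (hp3 : 3 < p) :
    ∑ j ∈ Ico 1 p, ((3 * j / p : ℕ) : ZMod p) / j = -2 * harmonicZMod p (p / 3) := by
  set n := p / 3 with hn
  have hmod : p % 3 ≠ 0 := fun h => by
    rcases hp.out.eq_one_or_self_of_dvd 3 (Nat.dvd_of_mod_eq_zero h) with h' | h' <;> omega
  have hconst : ∀ {c l u : ℕ}, (∀ j ∈ Ico l u, 3 * j / p = c) →
      ∑ j ∈ Ico l u, ((3 * j / p : ℕ) : ZMod p) / j = c * ∑ j ∈ Ico l u, (j : ZMod p)⁻¹ :=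
    fun h => by rw [mul_sum]; exact sum_congr rfl fun j hj => by rw [h j hj, div_eq_mul_inv]
  have hharmonic : harmonicZMod p n = ∑ j ∈ Ico 1 (n + 1), (j : ZMod p)⁻¹ := by
    rw [harmonicZMod, Ico_add_one_right_eq_Icc]
  have hreflect := sum_Ico_sub_inv_eq_neg_harmonicZMod (p := p) (n := n) (by omega)
  have htotal := sum_Ico_one_inv_eq_zero (p := p) (by omega)
  rw [← sum_Ico_consecutive _ (show 1 ≤ p - n by omega) (show p - n ≤ p by omega),
    ← sum_Ico_consecutive _ (show 1 ≤ n + 1 by omega) (show n + 1 ≤ p - n by omega)] at htotal ⊢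
  have hfirst : ∀ j ∈ Ico 1 (n + 1), 3 * j / p = 0 := fun j hj => by
    rw [mem_Ico] at hj; exact Nat.div_eq_of_lt (by omega)
  have hmiddle : ∀ j ∈ Ico (n + 1) (p - n), 3 * j / p = 1 := fun j hj => by
    rw [mem_Ico] at hj; exact Nat.div_eq_of_lt_le (by omega) (by omega)
  have hlast : ∀ j ∈ Ico (p - n) p, 3 * j / p = 2 := fun j hj => by
    rw [mem_Ico] at hj; exact Nat.div_eq_of_lt_le (by omega) (by omega)
  rw [hconst hfirst, hconst hmiddle, hconst hlast, ← hharmonic, hreflect]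
  rw [← hharmonic, hreflect] at htotal
  push_cast
  linear_combination htotal

theorem harmonic_third_eq_fermat_quotient (p : ℕ) (hp : p.Prime) (hp3 : 3 < p) :
    (∑ k ∈ Finset.Icc 1 (p / 3), ((k : ZMod p))⁻¹)
      = -(3 : ZMod p) * (2 : ZMod p)⁻¹ * (((3 ^ (p - 1) - 1 : ℤ) / (p : ℤ) : ℤ) : ZMod p) := by
  have := Fact.mk hp
  have h2 : (2 : ZMod p) ≠ 0 := by
    exact_mod_cast ZMod.natCast_ne_zero_of_pos_of_lt two_pos (by omega : 2 < p)
  have h3 : ((3 : ℕ) : ZMod p) ≠ 0 := ZMod.natCast_ne_zero_of_pos_of_lt three_pos hp3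
  have hlerch := lerch_formula h3
  rw [sum_Ico_three_mul_div_div_eq_neg_two_mul_harmonicZMod hp3, fermatQuotient] at hlerch
  change harmonicZMod p (p / 3) = _
  push_cast at hlerch ⊢
  field_simp
  linear_combination hlerch
end
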